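/- arXiv:2208.01680 — 2 statements merged into one kernel-verified Lean document; each statement's English description precedes it below -/
import Mathlib

section
/- Proposition 1 (symmetry at a relabeling time): Let N be a relabeling time, W the cyclic word of length N over {a,b} recording gap sizes, and J the index with u_J = N-1. Then W_{J-1} ≠ W_J and W_{J-1-k} = W_{J+k} for all k = 1, ..., N-2. -/
/-- The cyclic gap after the point `{m α}` among the points `{0α}, …, {(N-1)α}` on ℝ/ℤ:
the infimum of positive circular distances from `{m α}` to the other points. -/
noncomputable def gapAt (α : ℝ) (N : ℕ) (m : ℕ) : ℝ :=
  sInf {d : ℝ | 0 < d ∧ ∃ m' : ℕ, m' < N ∧ Int.fract ((m' : ℝ) * α - (m : ℝ) * α) = d}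

open Classical in
/-- The set of distinct cyclic gap lengths of the configuration `{0α}, …, {(N-1)α}`. -/
noncomputable def gapSet (α : ℝ) (N : ℕ) : Finset ℝ :=
  (Finset.range N).image (gapAt α N)

/-- The multiset of cyclic gaps of the configuration `{0α}, …, {(N-1)α}`. -/
noncomputable def gapMult (α : ℝ) (N : ℕ) : Multiset ℝ :=
  (Multiset.range N).map (gapAt α N)

/-- Cyclic extension of the ordering permutation `u` to integer indices, mod `N`. -/
def uc (N : ℕ) (u : ℕ → ℕ) (j : ℤ) : ℕ := u ((j % (N : ℤ)).toNat)

/-!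
Sort the points so that `{u 0 α} < ⋯ < {u (N-1) α}`; then `u 0 = 0` and the gap after `u j` is
`{(u (j+1) - u j) α}`, indices mod `N`. Since `k ↦ {k α}` is injective on `ℤ`, two gap lengths
force every step `u (j+1) - u j` to be `r = u 1` or `-s` with `s = u (N-1)`, and `r + s = N`:
the point `N - r` cannot step forward, and `{r α}` minimal, `{s α}` maximal exclude `r + s < N`.
Hence `u j = j r mod N`, and the gap after `m` is of the first or second kind according as
`m + r < N` or not. With `J r ≡ -1`, the positions `p, q ≤ N - 2` of `J - 1 - k` and `J + k`
satisfy `p + q + r + 2 ∈ {N, 2N}`: in the first case both gaps are of the first kind, in the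
second both are of the second kind.
-/

open Set

section Fract

variable {R : Type*} [Field R] [LinearOrder R] [IsStrictOrderedRing R] [FloorRing R]

theorem Int.fract_sub_of_fract_le {a b : R} (h : Int.fract b ≤ Int.fract a) :
    Int.fract (a - b) = Int.fract a - Int.fract b :=
  Int.fract_eq_iff.2 ⟨sub_nonneg.2 h, by linarith [Int.fract_lt_one a, Int.fract_nonneg b],
    ⌊a⌋ - ⌊b⌋, by push_cast; rw [← Int.self_sub_fract a, ← Int.self_sub_fract b]; abel⟩

theorem Int.fract_sub_of_fract_lt {a b : R} (h : Int.fract a < Int.fract b) :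
    Int.fract (a - b) = Int.fract a - Int.fract b + 1 :=
  Int.fract_eq_iff.2 ⟨by linarith [Int.fract_nonneg a, Int.fract_lt_one b], by linarith,
    ⌊a⌋ - ⌊b⌋ - 1, by push_cast; rw [← Int.self_sub_fract a, ← Int.self_sub_fract b]; abel⟩

theorem StrictMonoOn.fract_sub_succ_le {y : ℕ → R} {N : ℕ}
    (hy : StrictMonoOn (fun j => Int.fract (y j)) (Iio N)) {i j : ℕ} (hi : i < N) (hj : j < N)
    (hij : i ≠ j) : Int.fract (y ((j + 1) % N) - y j) ≤ Int.fract (y i - y j) := by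
  have hlt : ∀ {a b}, a < b → b < N → Int.fract (y a) < Int.fract (y b) := fun hab hb =>
    hy (mem_Iio.2 (hab.trans hb)) (mem_Iio.2 hb) hab
  have hle : ∀ {a b}, a ≤ b → b < N → Int.fract (y a) ≤ Int.fract (y b) := fun hab hb =>
    hy.monotoneOn (mem_Iio.2 (hab.trans_lt hb)) (mem_Iio.2 hb) hab
  rcases (show j + 1 < N ∨ j + 1 = N by omega) with hjN | hjN
  · rw [Nat.mod_eq_of_lt hjN, Int.fract_sub_of_fract_le (hlt (by omega : j < j + 1) hjN).le]
    rcases hij.lt_or_gt with hij | hij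
    · rw [Int.fract_sub_of_fract_lt (hlt hij hj)]
      linarith [Int.fract_lt_one (y (j + 1)), Int.fract_nonneg (y i)]
    · rw [Int.fract_sub_of_fract_le (hlt hij hi).le]
      linarith [hle (show j + 1 ≤ i by omega) hi]
  · have hij : i < j := by omega
    rw [hjN, Nat.mod_self, Int.fract_sub_of_fract_lt (hlt (by omega) hj),
      Int.fract_sub_of_fract_lt (hlt hij hj)]
    linarith [hle (Nat.zero_le i) hi]

end Fract

namespace Irrational

variable {α : ℝ}

theorem fract_intCast_mul_injective (hα : Irrational α) :
    Function.Injective fun d : ℤ => Int.fract ((d : ℝ) * α) := by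
  intro d e h
  obtain ⟨z, hz⟩ := Int.fract_eq_fract.1 h
  by_contra hde
  exact (hα.intCast_mul (sub_ne_zero.2 hde)).ne_int z (by push_cast; linarith)

theorem fract_intCast_mul_pos (hα : Irrational α) {d : ℤ} (hd : d ≠ 0) :
    0 < Int.fract ((d : ℝ) * α) :=
  (Int.fract_nonneg _).lt_of_ne fun h =>
    hd <| hα.fract_intCast_mul_injective <| by simpa using h.symm

end Irrational

theorem gapAt_eq_of_forall_le {α : ℝ} (hα : Irrational α) {N m m' : ℕ} (hm' : m' < N)
    (hne : m' ≠ m)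
    (hmin : ∀ i < N, i ≠ m → Int.fract ((m' : ℝ) * α - m * α) ≤ Int.fract ((i : ℝ) * α - m * α)) :
    gapAt α N m = Int.fract ((m' : ℝ) * α - m * α) := by
  refine IsLeast.csInf_eq ⟨⟨?_, m', hm', rfl⟩, ?_⟩
  · rw [show (m' : ℝ) * α - m * α = (((m' : ℤ) - m : ℤ) : ℝ) * α by push_cast; ring]
    exact hα.fract_intCast_mul_pos (by omega)
  · rintro _ ⟨hd, i, hi, rfl⟩
    refine hmin i hi fun him => ?_
    simp [him] at hd

theorem gapAt_eq_or_eq_of_card_gapSet_eq_two {α : ℝ} {N : ℕ} (hrel : (gapSet α N).card = 2)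
    {a b m : ℕ} (ha : a < N) (hb : b < N) (hab : gapAt α N a ≠ gapAt α N b) (hm : m < N) :
    gapAt α N m = gapAt α N a ∨ gapAt α N m = gapAt α N b := by
  classical
  have hmem : ∀ {i}, i < N → gapAt α N i ∈ gapSet α N := fun hi =>
    Finset.mem_image.2 ⟨_, Finset.mem_range.2 hi, rfl⟩
  have hpair : {gapAt α N a, gapAt α N b} = gapSet α N :=
    Finset.eq_of_subset_of_card_le
      (Finset.insert_subset (hmem ha) (Finset.singleton_subset_iff.2 (hmem hb)))
      (by rw [hrel, Finset.card_pair hab])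
  simpa [← hpair] using hmem hm

section Ordering

variable {α : ℝ} {N : ℕ} {u : ℕ → ℕ}

theorem ordering_zero (hN : 0 < N) (hbij : BijOn u (Iio N) (Iio N))
    (hmono : StrictMonoOn (fun j => Int.fract ((u j : ℝ) * α)) (Iio N)) : u 0 = 0 := by
  obtain ⟨j, hj, hj0⟩ := hbij.surjOn (mem_Iio.2 hN)
  obtain rfl | hpos := j.eq_zero_or_pos
  · exact hj0
  · have := hmono (mem_Iio.2 hN) hj hpos
    simp only [hj0, Nat.cast_zero, zero_mul, Int.fract_zero] at this
    exact absurd this (Int.fract_nonneg _).not_gt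

theorem ordering_one_pos (hN : 2 ≤ N) (hbij : BijOn u (Iio N) (Iio N))
    (hmono : StrictMonoOn (fun j => Int.fract ((u j : ℝ) * α)) (Iio N)) : 0 < u 1 := by
  refine Nat.pos_of_ne_zero fun h => ?_
  have := hbij.injOn (mem_Iio.2 (by omega : 1 < N)) (mem_Iio.2 (by omega : 0 < N))
    (h.trans (ordering_zero (by omega) hbij hmono).symm)
  omega

theorem gapAt_ordering (hα : Irrational α) (hN : 2 ≤ N) (hbij : BijOn u (Iio N) (Iio N))
    (hmono : StrictMonoOn (fun j => Int.fract ((u j : ℝ) * α)) (Iio N)) {j : ℕ} (hj : j < N) :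
    gapAt α N (u j) = Int.fract ((((u ((j + 1) % N) : ℤ) - u j : ℤ) : ℝ) * α) := by
  have hsucc : (j + 1) % N < N := Nat.mod_lt _ (by omega)
  have hsucc_ne : (j + 1) % N ≠ j := by
    rcases (show j + 1 < N ∨ j + 1 = N by omega) with h | h
    · rw [Nat.mod_eq_of_lt h]; omega
    · rw [h, Nat.mod_self]; omega
  rw [show (((u ((j + 1) % N) : ℤ) - u j : ℤ) : ℝ) * α = (u ((j + 1) % N) : ℝ) * α - u j * α by
    push_cast; ring]
  refine gapAt_eq_of_forall_le hα (hbij.mapsTo hsucc)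
    (fun h => hsucc_ne (hbij.injOn hsucc hj h)) fun i hi hne => ?_
  obtain ⟨i, hi', rfl⟩ := hbij.surjOn hi
  exact hmono.fract_sub_succ_le hi' hj fun h => hne (h ▸ rfl)

theorem ordering_step_eq_or (hα : Irrational α) (hN : 2 ≤ N) (hbij : BijOn u (Iio N) (Iio N))
    (hmono : StrictMonoOn (fun j => Int.fract ((u j : ℝ) * α)) (Iio N))
    (hrel : (gapSet α N).card = 2) {j : ℕ} (hj : j < N) :
    (u ((j + 1) % N) : ℤ) - u j = u 1 ∨ (u ((j + 1) % N) : ℤ) - u j = -u (N - 1) := by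
  have hu0 := ordering_zero (by omega) hbij hmono
  have hinj := hα.fract_intCast_mul_injective
  have hgap_first : gapAt α N (u 0) = Int.fract (((u 1 : ℤ) : ℝ) * α) := by
    rw [gapAt_ordering hα hN hbij hmono (by omega : 0 < N), Nat.mod_eq_of_lt (by omega : 0 + 1 < N),
      hu0, Nat.cast_zero, sub_zero]
  have hgap_last : gapAt α N (u (N - 1)) = Int.fract (((-u (N - 1) : ℤ) : ℝ) * α) := by
    rw [gapAt_ordering hα hN hbij hmono (by omega : N - 1 < N),
      Nat.sub_add_cancel (by omega : 1 ≤ N), Nat.mod_self, hu0, Nat.cast_zero, zero_sub]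
  have hne : gapAt α N (u 0) ≠ gapAt α N (u (N - 1)) := by
    rw [hgap_first, hgap_last]
    intro h
    have := hinj h
    have := ordering_one_pos hN hbij hmono
    omega
  rcases gapAt_eq_or_eq_of_card_gapSet_eq_two hrel (hbij.mapsTo (mem_Iio.2 (by omega : 0 < N)))
    (hbij.mapsTo (mem_Iio.2 (by omega : N - 1 < N))) hne (hbij.mapsTo hj) with h | h
  · rw [gapAt_ordering hα hN hbij hmono hj, hgap_first] at h
    exact Or.inl (hinj h)
  · rw [gapAt_ordering hα hN hbij hmono hj, hgap_last] at h
    exact Or.inr (hinj h)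

theorem ordering_one_add_ordering_last (hα : Irrational α) (hN : 2 ≤ N)
    (hbij : BijOn u (Iio N) (Iio N))
    (hmono : StrictMonoOn (fun j => Int.fract ((u j : ℝ) * α)) (Iio N))
    (hrel : (gapSet α N).card = 2) : u 1 + u (N - 1) = N := by
  have hr := ordering_one_pos hN hbij hmono
  have hrN : u 1 < N := hbij.mapsTo (mem_Iio.2 (by omega : 1 < N))
  refine le_antisymm ?_ (not_lt.1 fun hlt => ?_)
  · -- the point `N - u 1` cannot step forward by `u 1`, so it steps back by `u (N - 1)`
    obtain ⟨j, hj, hjm⟩ := hbij.surjOn (mem_Iio.2 (by omega : N - u 1 < N))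
    have hnext : u ((j + 1) % N) < N := hbij.mapsTo (mem_Iio.2 (Nat.mod_lt _ (by omega)))
    rcases ordering_step_eq_or hα hN hbij hmono hrel (j := j) hj with h | h <;> omega
  · -- `u 1` and `u (N - 1)` are the points closest to `0` and `1`, so `u 1 + u (N - 1)` lies
    -- outside `[0, N)`
    obtain ⟨i, hi, hik⟩ := hbij.surjOn (mem_Iio.2 hlt)
    have hi0 : i ≠ 0 := fun h => by
      rw [h, ordering_zero (by omega) hbij hmono] at hik; omega
    have hmin := hmono.monotoneOn (mem_Iio.2 (by omega : 1 < N)) hi (by omega : 1 ≤ i)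
    have hmax := hmono.monotoneOn hi (mem_Iio.2 (by omega : N - 1 < N)) (Nat.le_sub_one_of_lt hi)
    simp only [hik, Nat.cast_add, add_mul] at hmin hmax
    have hpos : 0 < Int.fract ((u 1 : ℝ) * α) := by
      simpa using hα.fract_intCast_mul_pos (d := u 1) (by omega)
    obtain ⟨z, hz⟩ := Int.fract_add ((u 1 : ℝ) * α) (u (N - 1) * α)
    have hz_le := Int.fract_add_le ((u 1 : ℝ) * α) (u (N - 1) * α)
    have hz_ge := Int.fract_add_fract_le ((u 1 : ℝ) * α) (u (N - 1) * α)
    have hz01 : z = 0 ∨ z = -1 := by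
      have : z ≤ 0 := by exact_mod_cast (show (z : ℝ) ≤ 0 by linarith)
      have : -1 ≤ z := by exact_mod_cast (show (-1 : ℝ) ≤ z by linarith)
      omega
    rcases hz01 with rfl | rfl
    · push_cast at hz; linarith
    · push_cast at hz; linarith [Int.fract_lt_one ((u (N - 1) : ℝ) * α)]

theorem ordering_succ (hα : Irrational α) (hN : 2 ≤ N) (hbij : BijOn u (Iio N) (Iio N))
    (hmono : StrictMonoOn (fun j => Int.fract ((u j : ℝ) * α)) (Iio N))
    (hrel : (gapSet α N).card = 2) {j : ℕ} (hj : j < N) :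
    u ((j + 1) % N) = (u j + u 1) % N := by
  have hsum := ordering_one_add_ordering_last hα hN hbij hmono hrel
  have hnext : u ((j + 1) % N) < N := hbij.mapsTo (mem_Iio.2 (Nat.mod_lt _ (by omega)))
  have hcur : u j < N := hbij.mapsTo hj
  rcases ordering_step_eq_or hα hN hbij hmono hrel hj with h | h
  · rw [Nat.mod_eq_of_lt (show u j + u 1 < N by omega)]; omega
  · rw [show u j + u 1 = u ((j + 1) % N) + N by omega, Nat.add_mod_right, Nat.mod_eq_of_lt hnext]

theorem ordering_eq_mul_mod (hα : Irrational α) (hN : 2 ≤ N) (hbij : BijOn u (Iio N) (Iio N))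
    (hmono : StrictMonoOn (fun j => Int.fract ((u j : ℝ) * α)) (Iio N))
    (hrel : (gapSet α N).card = 2) {j : ℕ} (hj : j < N) : u j = j * u 1 % N := by
  induction j with
  | zero => simpa using ordering_zero (by omega) hbij hmono
  | succ j ih =>
    rw [← Nat.mod_eq_of_lt hj, ordering_succ hα hN hbij hmono hrel (by omega), ih (by omega),
      Nat.mod_add_mod, Nat.mod_eq_of_lt hj, add_one_mul]

theorem gapAt_eq_ite (hα : Irrational α) (hN : 2 ≤ N) (hbij : BijOn u (Iio N) (Iio N))
    (hmono : StrictMonoOn (fun j => Int.fract ((u j : ℝ) * α)) (Iio N))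
    (hrel : (gapSet α N).card = 2) {m : ℕ} (hm : m < N) :
    gapAt α N m = Int.fract (((if m + u 1 < N then (u 1 : ℤ) else -u (N - 1) : ℤ) : ℝ) * α) := by
  have hsum := ordering_one_add_ordering_last hα hN hbij hmono hrel
  obtain ⟨j, hj, rfl⟩ := hbij.surjOn hm
  have hnext : u ((j + 1) % N) < N := hbij.mapsTo (mem_Iio.2 (Nat.mod_lt _ (by omega)))
  rw [gapAt_ordering hα hN hbij hmono hj]
  rcases ordering_step_eq_or hα hN hbij hmono hrel hj with h | h <;> rw [h]
  · rw [if_pos (by omega)]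
  · rw [if_neg (by omega)]

theorem gapAt_eq_gapAt_iff (hα : Irrational α) (hN : 2 ≤ N) (hbij : BijOn u (Iio N) (Iio N))
    (hmono : StrictMonoOn (fun j => Int.fract ((u j : ℝ) * α)) (Iio N))
    (hrel : (gapSet α N).card = 2) {m m' : ℕ} (hm : m < N) (hm' : m' < N) :
    gapAt α N m = gapAt α N m' ↔ (m + u 1 < N ↔ m' + u 1 < N) := by
  have hr := ordering_one_pos hN hbij hmono
  rw [gapAt_eq_ite hα hN hbij hmono hrel hm, gapAt_eq_ite hα hN hbij hmono hrel hm',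
    hα.fract_intCast_mul_injective.eq_iff]
  split_ifs <;> omega

end Ordering

theorem Int.eq_or_eq_two_mul_of_dvd {n x : ℤ} (h : n ∣ x) (h0 : 0 < x) (h3 : x < 3 * n) :
    x = n ∨ x = 2 * n := by
  obtain ⟨t, rfl⟩ := h
  have : 0 < t := by nlinarith
  have : t < 3 := by nlinarith
  interval_cases t <;> omega

section CyclicIndex

variable {N r : ℕ} {u : ℕ → ℕ}

theorem Int.toNat_emod_lt (hN : 0 < N) (j : ℤ) : (j % (N : ℤ)).toNat < N := by
  have := Int.emod_lt_of_pos j (by omega : (0 : ℤ) < N)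
  omega

theorem uc_lt (hN : 0 < N) (hu : MapsTo u (Iio N) (Iio N)) (j : ℤ) : uc N u j < N :=
  hu (Int.toNat_emod_lt hN j)

theorem uc_modEq_mul (hN : 0 < N) (hu : ∀ j < N, u j = j * r % N) (j : ℤ) :
    (uc N u j : ℤ) ≡ j * r [ZMOD N] := by
  rw [uc, hu _ (Int.toNat_emod_lt hN j)]
  push_cast
  rw [Int.toNat_of_nonneg (Int.emod_nonneg j (by omega))]
  exact Int.mod_modEq _ _ |>.trans ((Int.mod_modEq j N).mul_right r)

theorem modEq_of_uc_eq (hN : 0 < N) (hinj : InjOn u (Iio N)) {i j : ℤ}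
    (h : uc N u i = uc N u j) : i ≡ j [ZMOD N] := by
  have := hinj (Int.toNat_emod_lt hN i) (Int.toNat_emod_lt hN j) h
  have := Int.emod_nonneg i (by omega : (N : ℤ) ≠ 0)
  have := Int.emod_nonneg j (by omega : (N : ℤ) ≠ 0)
  unfold Int.ModEq
  omega

theorem uc_symmetry (hr : 0 < r) (hrN : r < N) (hu : ∀ j < N, u j = j * r % N)
    (hinj : InjOn u (Iio N)) {J : ℤ} (hJ : uc N u J = N - 1) :
    ¬(uc N u (J - 1) + r < N ↔ uc N u J + r < N) ∧
      ∀ k : ℕ, 1 ≤ k → k ≤ N - 2 → (uc N u (J - 1 - k) + r < N ↔ uc N u (J + k) + r < N) := by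
  have hN : 0 < N := by omega
  have hlt : ∀ j, uc N u j < N := uc_lt hN fun i hi => by
    rw [mem_Iio, hu i hi]; exact Nat.mod_lt _ hN
  have hdecomp : ∀ j : ℤ, ∃ q : ℤ, j * r = uc N u j + N * q := fun j => by
    obtain ⟨q, hq⟩ := (uc_modEq_mul hN hu j).dvd
    exact ⟨q, by linarith⟩
  have hdvd_of_last : ∀ {j : ℤ}, uc N u j = N - 1 → (N : ℤ) ∣ J - j := fun h =>
    (modEq_of_uc_eq hN hinj (h.trans hJ.symm)).dvd
  obtain ⟨qJ, hqJ⟩ := hdecomp J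
  rw [show (uc N u J : ℤ) = N - 1 by omega] at hqJ
  refine ⟨?_, fun k hk1 hk2 => ?_⟩
  · obtain ⟨q, hq⟩ := hdecomp (J - 1)
    have := hlt (J - 1)
    rcases Int.eq_or_eq_two_mul_of_dvd (n := N) (x := uc N u (J - 1) + r + 1)
      ⟨qJ - q + 1, by linear_combination hqJ - hq⟩ (by positivity) (by omega) with h | h <;> omega
  · have hp : uc N u (J - 1 - k) ≠ N - 1 := fun h => by
      have := Int.le_of_dvd (by omega)
        (show (N : ℤ) ∣ k + 1 by convert hdvd_of_last h using 1; ring)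
      omega
    have hq : uc N u (J + k) ≠ N - 1 := fun h => by
      have := Int.le_of_dvd (by omega) (show (N : ℤ) ∣ k by simpa using hdvd_of_last h)
      omega
    obtain ⟨q₁, hq₁⟩ := hdecomp (J - 1 - k)
    obtain ⟨q₂, hq₂⟩ := hdecomp (J + k)
    have := hlt (J - 1 - k)
    have := hlt (J + k)
    rcases Int.eq_or_eq_two_mul_of_dvd (n := N) (x := uc N u (J - 1 - k) + uc N u (J + k) + r + 2)
      ⟨2 * qJ - q₁ - q₂ + 2, by linear_combination 2 * hqJ - hq₁ - hq₂⟩ (by positivity)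
      (by omega) with h | h <;> omega

end CyclicIndex

theorem symmetry_at_relabeling_time (α : ℝ) (hα : Irrational α) (N : ℕ) (hN : 2 ≤ N)
    (u : ℕ → ℕ) (hbij : Set.BijOn u (Set.Iio N) (Set.Iio N))
    (hmono : StrictMonoOn (fun j => Int.fract ((u j : ℝ) * α)) (Set.Iio N))
    (hrel : (gapSet α N).card = 2)
    (J : ℕ) (hJ : J < N) (hJval : u J = N - 1) :
    gapAt α N (uc N u ((J : ℤ) - 1)) ≠ gapAt α N (uc N u (J : ℤ)) ∧
    ∀ k : ℕ, 1 ≤ k → k ≤ N - 2 →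
      gapAt α N (uc N u ((J : ℤ) - 1 - (k : ℤ))) =
        gapAt α N (uc N u ((J : ℤ) + (k : ℤ))) := by
  have hlt := uc_lt (by omega) hbij.mapsTo
  have hgap := fun i j => gapAt_eq_gapAt_iff hα hN hbij hmono hrel (hlt i) (hlt j)
  have hJ' : uc N u J = N - 1 := by
    rw [uc, Int.emod_eq_of_lt (by omega) (by omega), Int.toNat_natCast, hJval]
  obtain ⟨hfirst, hrest⟩ := uc_symmetry (ordering_one_pos hN hbij hmono)
    (hbij.mapsTo (mem_Iio.2 (by omega : 1 < N)))
    (fun j hj => ordering_eq_mul_mod hα hN hbij hmono hrel hj) hbij.injOn hJ'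
  exact ⟨fun h => hfirst ((hgap _ _).1 h), fun k hk1 hk2 => (hgap _ _).2 (hrest k hk1 hk2)⟩
end

section
/- At a relabeling time N, the gap δ_j = {u_{j+1}α} - {u_j α} (cyclically) is determined by whether u_{j+1} = u_j + u_1 or u_{j+1} = u_j + u_1 - N: the two cases give the two distinct gap lengths {u_1 α}'s fractional translate values; in particular δ_j = δ_{j'} whenever u_{j+1} - u_j = u_{j'+1} - u_{j'}. -/
/-!
Let `u` sort the points `{mα}`, `m < N`, along the circle. Then `u 0 = 0`, and `u 1` is the index of
the smallest nonzero point, so `{u₁α} ≤ {dα}` for `0 < d < N`. The gap after `{u_j α}` is the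
circular distance `{(u_{j+1} - u_j)α}` to the next point, and since `d ↦ {dα}` is injective on `ℤ`,
this gap determines the step `u_{j+1} - u_j`; this already gives the second claim.
If `m + u₁ < N`, the gap after `m` is `{u₁α}`: a shorter one would give a point closer to `0` than
`{u₁α}`. So the step there is `u₁`, while every other `m` has a step `≠ u₁`, hence the other gap
length, hence one common step. The largest point `u_{N-1}` is followed by `0`, so that common
step is `-u_{N-1}`, and looking at `m = N - u₁` forces `u_{N-1} = N - u₁`.
-/

namespace Int

theorem fract_sub_of_fract_le_s12 {a b : ℝ} (h : fract b ≤ fract a) :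
    fract (a - b) = fract a - fract b :=
  fract_eq_iff.2 ⟨by linarith, by linarith [fract_lt_one a, fract_nonneg b],
    ⌊a⌋ - ⌊b⌋, by push_cast; linarith [floor_add_fract a, floor_add_fract b]⟩

theorem fract_sub_of_fract_lt_s12 {a b : ℝ} (h : fract a < fract b) :
    fract (a - b) = fract a - fract b + 1 :=
  fract_eq_iff.2 ⟨by linarith [fract_nonneg a, fract_lt_one b], by linarith,
    ⌊a⌋ - ⌊b⌋ - 1, by push_cast; linarith [floor_add_fract a, floor_add_fract b]⟩

theorem fract_sub_pos_of_fract_ne {a b : ℝ} (h : fract a ≠ fract b) : 0 < fract (a - b) :=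
  (fract_nonneg _).lt_of_ne fun h0 => h <| fract_eq_fract.2
    ⟨⌊a - b⌋, by linarith [floor_add_fract (a - b)]⟩

end Int

theorem Irrational.fract_intCast_mul_injective_s12 {α : ℝ} (hα : Irrational α) :
    Function.Injective fun d : ℤ => Int.fract ((d : ℝ) * α) := by
  intro d d' h
  obtain ⟨z, hz⟩ := Int.fract_eq_fract.1 h
  by_contra hne
  exact (hα.intCast_mul (sub_ne_zero.2 hne)).ne_int z (by push_cast; linarith)

theorem Finset.eq_of_card_eq_two {β : Type*} {s : Finset β} {x y z : β} (hs : s.card = 2)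
    (hx : x ∈ s) (hy : y ∈ s) (hz : z ∈ s) (hyx : y ≠ x) (hzx : z ≠ x) : y = z := by
  classical
  exact Finset.card_le_one.1 (by rw [Finset.card_erase_of_mem hx, hs]) y
    (Finset.mem_erase.2 ⟨hyx, hy⟩) z (Finset.mem_erase.2 ⟨hzx, hz⟩)

theorem fract_cyclic_succ_sub_le {N : ℕ} {x : ℕ → ℝ}
    (hx : StrictMonoOn (fun j => Int.fract (x j)) (Set.Iio N))
    {i j : ℕ} (hi : i < N) (hj : j < N) (hij : i ≠ j) :
    Int.fract (x ((j + 1) % N) - x j) ≤ Int.fract (x i - x j) := by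
  have hlt : ∀ {k l}, k < N → l < N → k < l → Int.fract (x k) < Int.fract (x l) :=
    fun hk hl hkl => hx hk hl hkl
  rcases Nat.lt_or_gt_of_ne hij with hij | hji
  · have hwrap : Int.fract (x ((j + 1) % N) - x j) ≤ Int.fract (x i) - Int.fract (x j) + 1 := by
      rcases Nat.lt_or_ge (j + 1) N with hsucc | hlast
      · rw [Nat.mod_eq_of_lt hsucc, Int.fract_sub_of_fract_le_s12 (hlt hj hsucc j.lt_succ_self).le]
        linarith [Int.fract_lt_one (x (j + 1)), Int.fract_nonneg (x i)]
      · have h0 : (j + 1) % N = 0 := by rw [show j + 1 = N by omega, Nat.mod_self]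
        have h0i : Int.fract (x 0) ≤ Int.fract (x i) := (hx.le_iff_le (show 0 < N by omega) hi).2 (by omega)
        rw [h0, Int.fract_sub_of_fract_lt_s12 (hlt (by omega) hj (by omega))]
        linarith
    rwa [Int.fract_sub_of_fract_lt_s12 (hlt hi hj hij)]
  · have hsucc : j + 1 < N := by omega
    rw [Nat.mod_eq_of_lt hsucc, Int.fract_sub_of_fract_le_s12 (hlt hj hsucc j.lt_succ_self).le,
      Int.fract_sub_of_fract_le_s12 (hlt hj hi hji).le]
    linarith [(hx.le_iff_le hsucc hi).2 hji]

theorem natCast_mul_sub_natCast_mul (α : ℝ) (m m' : ℕ) :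
    (m' : ℝ) * α - m * α = ((m' - m : ℤ) : ℝ) * α := by
  push_cast; ring

namespace SortedOrbit

variable {α : ℝ} {N : ℕ} {u : ℕ → ℕ}

theorem gapAt_eq_fract_succ (hN : 2 ≤ N) (hbij : Set.BijOn u (Set.Iio N) (Set.Iio N))
    (hmono : StrictMonoOn (fun j => Int.fract ((u j : ℝ) * α)) (Set.Iio N)) {j : ℕ} (hj : j < N) :
    gapAt α N (u j) = Int.fract (((u ((j + 1) % N) - u j : ℤ) : ℝ) * α) := by
  have hsucc : (j + 1) % N ≠ j := by
    rcases Nat.lt_or_ge (j + 1) N with h | h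
    · rw [Nat.mod_eq_of_lt h]; omega
    · rw [show j + 1 = N by omega, Nat.mod_self]; omega
  rw [← natCast_mul_sub_natCast_mul]
  refine IsLeast.csInf_eq ⟨⟨Int.fract_sub_pos_of_fract_ne ?_, _,
    hbij.mapsTo (Nat.mod_lt _ (by omega)), rfl⟩, ?_⟩
  · exact hmono.injOn.ne (Nat.mod_lt _ (by omega)) hj hsucc
  · rintro d ⟨hd, m', hm', rfl⟩
    obtain ⟨k, hk, rfl⟩ := hbij.surjOn hm'
    refine fract_cyclic_succ_sub_le (x := fun k => (u k : ℝ) * α) hmono hk hj ?_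
    rintro rfl
    simp at hd

theorem u_zero_eq_zero (hN : 0 < N) (hbij : Set.BijOn u (Set.Iio N) (Set.Iio N))
    (hmono : StrictMonoOn (fun j => Int.fract ((u j : ℝ) * α)) (Set.Iio N)) : u 0 = 0 := by
  obtain ⟨k, hk, hk0⟩ := hbij.surjOn (show 0 ∈ Set.Iio N from hN)
  have : k ≤ 0 := (hmono.le_iff_le hk hN).1 (by simp [hk0, Int.fract_nonneg])
  rwa [Nat.le_zero.1 this] at hk0

theorem fract_u_one_le_of_pos (hbij : Set.BijOn u (Set.Iio N) (Set.Iio N))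
    (hmono : StrictMonoOn (fun j => Int.fract ((u j : ℝ) * α)) (Set.Iio N))
    {d : ℤ} (hd : 0 < d) (hdN : d < N) : Int.fract ((u 1 : ℝ) * α) ≤ Int.fract ((d : ℝ) * α) := by
  lift d to ℕ using hd.le
  obtain ⟨k, hk, rfl⟩ := hbij.surjOn (show d ∈ Set.Iio N by simpa using hdN)
  have hk0 : k ≠ 0 := by
    rintro rfl
    simp [u_zero_eq_zero (by omega) hbij hmono] at hd
  have hkN : k < N := hk
  exact_mod_cast (hmono.le_iff_le (show 1 < N by omega) hk).2 (by omega)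

theorem u_one_ne_zero (hN : 2 ≤ N) (hbij : Set.BijOn u (Set.Iio N) (Set.Iio N))
    (hmono : StrictMonoOn (fun j => Int.fract ((u j : ℝ) * α)) (Set.Iio N)) : u 1 ≠ 0 := fun h =>
  one_ne_zero (hbij.injOn (show 1 < N by omega) (show 0 < N by omega)
    (h.trans (u_zero_eq_zero (by omega) hbij hmono).symm))

theorem fract_u_one_le_of_ne_zero (hα : Irrational α) (hbij : Set.BijOn u (Set.Iio N) (Set.Iio N))
    (hmono : StrictMonoOn (fun j => Int.fract ((u j : ℝ) * α)) (Set.Iio N))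
    {d : ℤ} (hd : d ≠ 0) (hlo : (u 1 : ℤ) - N < d) (hhi : d < N) :
    Int.fract ((u 1 : ℝ) * α) ≤ Int.fract ((d : ℝ) * α) := by
  rcases hd.lt_or_gt with hneg | hpos
  · by_contra! hlt
    have hdpos : 0 < Int.fract ((d : ℝ) * α) := (Int.fract_nonneg _).lt_of_ne fun h =>
      hd (hα.fract_intCast_mul_injective_s12 (by simpa using h.symm))
    have hle := fract_u_one_le_of_pos hbij hmono (d := u 1 - d) (by omega) (by omega)
    rw [show ((u 1 - d : ℤ) : ℝ) * α = (u 1 : ℝ) * α - d * α by push_cast; ring,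
      Int.fract_sub_of_fract_le_s12 hlt.le] at hle
    linarith
  · exact fract_u_one_le_of_pos hbij hmono hpos hhi

theorem gapAt_eq_fract_u_one (hα : Irrational α) (hN : 2 ≤ N)
    (hbij : Set.BijOn u (Set.Iio N) (Set.Iio N))
    (hmono : StrictMonoOn (fun j => Int.fract ((u j : ℝ) * α)) (Set.Iio N))
    {m : ℕ} (hm : m + u 1 < N) : gapAt α N m = Int.fract ((u 1 : ℝ) * α) := by
  refine IsLeast.csInf_eq ⟨⟨?_, m + u 1, hm, by rw [natCast_mul_sub_natCast_mul]; push_cast; ring_nf⟩, ?_⟩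
  · refine (Int.fract_nonneg _).lt_of_ne fun h => u_one_ne_zero hN hbij hmono ?_
    exact_mod_cast hα.fract_intCast_mul_injective_s12 (a₁ := u 1) (a₂ := 0) (by simpa using h.symm)
  · rintro d ⟨hd, m', hm', rfl⟩
    rw [natCast_mul_sub_natCast_mul] at hd ⊢
    refine fract_u_one_le_of_ne_zero hα hbij hmono ?_ (by omega) (by omega)
    rintro h
    simp [h] at hd

theorem succ_sub_eq_of_gapAt_eq (hα : Irrational α) (hN : 2 ≤ N)
    (hbij : Set.BijOn u (Set.Iio N) (Set.Iio N))
    (hmono : StrictMonoOn (fun j => Int.fract ((u j : ℝ) * α)) (Set.Iio N))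
    {k : ℕ} (hk : k < N) {t : ℤ} (h : gapAt α N (u k) = Int.fract ((t : ℝ) * α)) :
    (u ((k + 1) % N) : ℤ) - u k = t :=
  hα.fract_intCast_mul_injective_s12 ((gapAt_eq_fract_succ hN hbij hmono hk).symm.trans h)

theorem succ_sub_eq_u_one (hα : Irrational α) (hN : 2 ≤ N)
    (hbij : Set.BijOn u (Set.Iio N) (Set.Iio N))
    (hmono : StrictMonoOn (fun j => Int.fract ((u j : ℝ) * α)) (Set.Iio N))
    {k : ℕ} (hk : k < N) (hshort : u k + u 1 < N) : (u ((k + 1) % N) : ℤ) - u k = u 1 :=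
  succ_sub_eq_of_gapAt_eq hα hN hbij hmono hk
    (by rw [gapAt_eq_fract_u_one hα hN hbij hmono hshort, Int.cast_natCast])

theorem succ_sub_eq_or_eq_of_card_gapSet_eq_two (hα : Irrational α) (hN : 2 ≤ N)
    (hbij : Set.BijOn u (Set.Iio N) (Set.Iio N))
    (hmono : StrictMonoOn (fun j => Int.fract ((u j : ℝ) * α)) (Set.Iio N))
    (hrel : (gapSet α N).card = 2) {k : ℕ} (hk : k < N) :
    (u ((k + 1) % N) : ℤ) - u k = u 1 ∨ (u ((k + 1) % N) : ℤ) - u k = u 1 - N := by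
  have hu0 : u 0 = 0 := u_zero_eq_zero (by omega) hbij hmono
  have hu1 : u 1 ≠ 0 := u_one_ne_zero hN hbij hmono
  have hu1_lt : u 1 < N := hbij.mapsTo (show 1 < N by omega)
  have hsucc_lt : ∀ k, u ((k + 1) % N) < N := fun k => hbij.mapsTo (Nat.mod_lt _ (by omega))
  have hgap_mem : ∀ m, m < N → gapAt α N m ∈ gapSet α N := fun m hm =>
    Finset.mem_image_of_mem _ (Finset.mem_range.2 hm)
  have hlong_ne : ∀ {k}, k < N → N ≤ u k + u 1 → gapAt α N (u k) ≠ gapAt α N 0 := by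
    intro k hk h heq
    rw [gapAt_eq_fract_u_one hα hN hbij hmono (m := 0) (by omega), ← Int.cast_natCast] at heq
    have := succ_sub_eq_of_gapAt_eq hα hN hbij hmono hk heq
    have := hsucc_lt k
    omega
  have hlast : (u ((N - 1 + 1) % N) : ℤ) - u (N - 1) = - u (N - 1) := by
    rw [Nat.sub_add_cancel (by omega), Nat.mod_self, hu0]; simp
  have hlast_long : N ≤ u (N - 1) + u 1 := by
    by_contra! h
    have := succ_sub_eq_u_one hα hN hbij hmono (show N - 1 < N by omega) h
    omega
  have hlong : ∀ {k}, k < N → N ≤ u k + u 1 → (u ((k + 1) % N) : ℤ) - u k = - u (N - 1) := by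
    intro k hk h
    rw [← hlast]
    refine succ_sub_eq_of_gapAt_eq hα hN hbij hmono hk ?_
    rw [← gapAt_eq_fract_succ hN hbij hmono (by omega)]
    exact Finset.eq_of_card_eq_two hrel (hgap_mem 0 (by omega)) (hgap_mem _ (hbij.mapsTo hk))
      (hgap_mem _ (hbij.mapsTo (show N - 1 < N by omega)))
      (hlong_ne hk h) (hlong_ne (by omega) hlast_long)
  have hlast_le : u (N - 1) + u 1 ≤ N := by
    obtain ⟨k, hk, hkv⟩ := hbij.surjOn (show N - u 1 < N by omega)
    have := hlong hk (by omega)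
    omega
  rcases Nat.lt_or_ge (u k + u 1) N with h | h
  · exact Or.inl (succ_sub_eq_u_one hα hN hbij hmono hk h)
  · exact Or.inr (by rw [hlong hk h]; omega)

end SortedOrbit

open SortedOrbit

theorem exists_uc_eq_and_uc_succ_eq {N : ℕ} (hN : 0 < N) (u : ℕ → ℕ) (j : ℤ) :
    ∃ k < N, uc N u j = u k ∧ uc N u (j + 1) = u ((k + 1) % N) := by
  obtain ⟨k, hk⟩ : ∃ k : ℕ, j % N = k := ⟨_, (Int.toNat_of_nonneg (Int.emod_nonneg j (by omega))).symm⟩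
  have hkN : k < N := by have := Int.emod_lt_of_pos j (by omega : (0 : ℤ) < N); omega
  refine ⟨k, hkN, by simp [uc, hk], ?_⟩
  have : (j + 1) % N = ((k + 1) % N : ℕ) := by rw [Int.add_emod, hk]; push_cast; simp
  rw [uc, this, Int.toNat_natCast]

theorem gap_determined_by_index_difference (α : ℝ) (hα : Irrational α) (N : ℕ) (hN : 2 ≤ N)
    (u : ℕ → ℕ) (hbij : Set.BijOn u (Set.Iio N) (Set.Iio N))
    (hmono : StrictMonoOn (fun j => Int.fract ((u j : ℝ) * α)) (Set.Iio N))
    (hrel : (gapSet α N).card = 2) :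
    (∀ j : ℤ, (uc N u (j + 1) : ℤ) = (uc N u j : ℤ) + (u 1 : ℤ) ∨
      (uc N u (j + 1) : ℤ) = (uc N u j : ℤ) + (u 1 : ℤ) - (N : ℤ)) ∧
    ∀ j j' : ℤ, (uc N u (j + 1) : ℤ) - (uc N u j : ℤ) =
        (uc N u (j' + 1) : ℤ) - (uc N u j' : ℤ) →
      gapAt α N (uc N u j) = gapAt α N (uc N u j') := by
  constructor
  · intro j
    obtain ⟨k, hk, hj, hj1⟩ := exists_uc_eq_and_uc_succ_eq (by omega : 0 < N) u j
    rw [hj, hj1]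
    have := succ_sub_eq_or_eq_of_card_gapSet_eq_two hα hN hbij hmono hrel hk
    omega
  · intro j j' h
    obtain ⟨k, hk, hj, hj1⟩ := exists_uc_eq_and_uc_succ_eq (by omega : 0 < N) u j
    obtain ⟨k', hk', hj', hj'1⟩ := exists_uc_eq_and_uc_succ_eq (by omega : 0 < N) u j'
    rw [hj, hj1, hj', hj'1] at h
    rw [hj, hj', gapAt_eq_fract_succ hN hbij hmono hk, gapAt_eq_fract_succ hN hbij hmono hk', h]
end
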